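/- Let k ≥ 1 and p ≥ 2. There exists a constant c = c(k,p) > 0 such that for all z, η ∈ ℝ^k one has |V_p(z − η)| ≤ c |V_p(z) − V_p(η)|. -/

import Mathlib

/-!
For `‖η‖ ≤ ‖z‖`, expanding `⟪V_p z - V_p η, z - η⟫` shows that it is at least
`(1 + ‖z‖²)^((p-2)/4) ‖z - η‖² / 2`; Cauchy–Schwarz turns this into a lower bound for
`‖V_p z - V_p η‖`. On the other side `‖z - η‖ ≤ 2‖z‖` gives
`‖V_p (z - η)‖ ≤ 4^((p-2)/4) (1 + ‖z‖²)^((p-2)/4) ‖z - η‖`. The case `‖z‖ ≤ ‖η‖` follows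
by symmetry, since `V_p` is odd.
-/

noncomputable def Vp (p : ℝ) {E : Type*} [NormedAddCommGroup E] [NormedSpace ℝ E] (z : E) : E :=
  ((1 + ‖z‖ ^ 2) ^ ((p - 2) / 4)) • z

open scoped RealInnerProductSpace

section NormedSpace

variable {E : Type*} [NormedAddCommGroup E] [NormedSpace ℝ E]

lemma norm_Vp (p : ℝ) (w : E) : ‖Vp p w‖ = (1 + ‖w‖ ^ 2) ^ ((p - 2) / 4) * ‖w‖ := by
  rw [Vp, norm_smul, Real.norm_eq_abs, abs_of_pos (Real.rpow_pos_of_pos (by positivity) _)]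

lemma Vp_neg (p : ℝ) (w : E) : Vp p (-w) = -Vp p w := by
  simp only [Vp, norm_neg, smul_neg]

lemma norm_Vp_sub_comm (p : ℝ) (z η : E) : ‖Vp p (z - η)‖ = ‖Vp p (η - z)‖ := by
  rw [← neg_sub, Vp_neg, norm_neg]

lemma norm_Vp_sub_le_of_norm_le {p : ℝ} (hp : 2 ≤ p) {z η : E} (h : ‖η‖ ≤ ‖z‖) :
    ‖Vp p (z - η)‖ ≤ 4 ^ ((p - 2) / 4) * (1 + ‖z‖ ^ 2) ^ ((p - 2) / 4) * ‖z - η‖ := by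
  have hsub : ‖z - η‖ ≤ 2 * ‖z‖ := (norm_sub_le z η).trans (by linarith)
  have hbase : 1 + ‖z - η‖ ^ 2 ≤ 4 * (1 + ‖z‖ ^ 2) := by
    nlinarith [norm_nonneg (z - η)]
  rw [norm_Vp, ← Real.mul_rpow (by norm_num) (by positivity)]
  gcongr

end NormedSpace

section InnerProductSpace

variable {E : Type*} [NormedAddCommGroup E] [InnerProductSpace ℝ E]

lemma half_mul_norm_sub_sq_le_inner_smul_sub_smul {A B : ℝ} (hB : 0 ≤ B) (hBA : B ≤ A)
    {z η : E} (h : ‖η‖ ≤ ‖z‖) :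
    A / 2 * ‖z - η‖ ^ 2 ≤ ⟪A • z - B • η, z - η⟫ := by
  have hexp : ⟪A • z - B • η, z - η⟫ = A * ‖z‖ ^ 2 - (A + B) * ⟪z, η⟫ + B * ‖η‖ ^ 2 := by
    rw [inner_sub_left, inner_sub_right, inner_sub_right, real_inner_smul_left,
      real_inner_smul_left, real_inner_smul_left, real_inner_smul_left,
      real_inner_self_eq_norm_sq, real_inner_self_eq_norm_sq, real_inner_comm η z]
    ring
  -- The difference of the two sides is `A (‖z‖² - ‖η‖²) / 2 + B (‖η‖² - ⟪z, η⟫)`,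
  -- and `⟪z, η⟫ ≤ ‖z‖ ‖η‖` with `B ‖η‖ ≤ A (‖z‖ + ‖η‖) / 2`.
  rw [hexp, norm_sub_sq_real]
  nlinarith [real_inner_le_norm z η, norm_nonneg η,
    mul_nonneg (mul_nonneg (sub_nonneg.2 hBA) (norm_nonneg η)) (sub_nonneg.2 h),
    mul_nonneg (hB.trans hBA) (sq_nonneg (‖z‖ - ‖η‖)),
    mul_nonneg hB (sub_nonneg.2 (real_inner_le_norm z η))]

lemma rpow_mul_norm_sub_le_two_mul_norm_Vp_sub {p : ℝ} (hp : 2 ≤ p) {z η : E}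
    (h : ‖η‖ ≤ ‖z‖) :
    (1 + ‖z‖ ^ 2) ^ ((p - 2) / 4) * ‖z - η‖ ≤ 2 * ‖Vp p z - Vp p η‖ := by
  have hmono : (1 + ‖z‖ ^ 2) ^ ((p - 2) / 4) / 2 * ‖z - η‖ ^ 2 ≤ ⟪Vp p z - Vp p η, z - η⟫ :=
    half_mul_norm_sub_sq_le_inner_smul_sub_smul (by positivity)
      (Real.rpow_le_rpow (by positivity) (by gcongr) (by linarith)) h
  have hCS := hmono.trans (real_inner_le_norm (Vp p z - Vp p η) (z - η))
  rcases (norm_nonneg (z - η)).eq_or_lt with h0 | hpos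
  · rw [← h0]
    simp
  · nlinarith

lemma norm_Vp_sub_le_mul_norm_Vp_sub_Vp_of_norm_le {p : ℝ} (hp : 2 ≤ p) {z η : E}
    (h : ‖η‖ ≤ ‖z‖) :
    ‖Vp p (z - η)‖ ≤ 2 * 4 ^ ((p - 2) / 4) * ‖Vp p z - Vp p η‖ := by
  calc ‖Vp p (z - η)‖
      ≤ 4 ^ ((p - 2) / 4) * ((1 + ‖z‖ ^ 2) ^ ((p - 2) / 4) * ‖z - η‖) := by
        rw [← mul_assoc]; exact norm_Vp_sub_le_of_norm_le hp h
    _ ≤ 4 ^ ((p - 2) / 4) * (2 * ‖Vp p z - Vp p η‖) := by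
        exact mul_le_mul_of_nonneg_left (rpow_mul_norm_sub_le_two_mul_norm_Vp_sub hp h)
          (by positivity)
    _ = 2 * 4 ^ ((p - 2) / 4) * ‖Vp p z - Vp p η‖ := by ring

lemma norm_Vp_sub_le_mul_norm_Vp_sub_Vp {p : ℝ} (hp : 2 ≤ p) (z η : E) :
    ‖Vp p (z - η)‖ ≤ 2 * 4 ^ ((p - 2) / 4) * ‖Vp p z - Vp p η‖ := by
  rcases le_total ‖η‖ ‖z‖ with h | h
  · exact norm_Vp_sub_le_mul_norm_Vp_sub_Vp_of_norm_le hp h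
  · rw [norm_Vp_sub_comm, norm_sub_rev]
    exact norm_Vp_sub_le_mul_norm_Vp_sub_Vp_of_norm_le hp h

end InnerProductSpace

theorem stmt_8_general (k : ℕ) (p : ℝ) (hp : 2 ≤ p) :
    ∃ c : ℝ, 0 < c ∧ ∀ z η : EuclideanSpace ℝ (Fin k),
      ‖Vp p (z - η)‖ ≤ c * ‖Vp p z - Vp p η‖ :=
  ⟨2 * 4 ^ ((p - 2) / 4), by positivity, norm_Vp_sub_le_mul_norm_Vp_sub_Vp hp⟩

theorem stmt_8 (k : ℕ) (hk : 1 ≤ k) (p : ℝ) (hp : 2 ≤ p) :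
    ∃ c : ℝ, 0 < c ∧ ∀ z η : EuclideanSpace ℝ (Fin k),
      ‖Vp p (z - η)‖ ≤ c * ‖Vp p z - Vp p η‖ :=
  stmt_8_general k p hp
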